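/- arXiv:1702.04974 — 2 statements merged into one kernel-verified Lean document; each statement's English description precedes it below -/
import Mathlib

section
/- For every n ≥ 1 and every discrete sequence Λ in the unit disk 𝔻 one has the inclusions X^n(Λ) ⊆ X^{n−1}(Λ) ⊆ ⋯ ⊆ X^0(Λ); in particular, if ω ∈ X^n(Λ) then ω ∈ X^{n−1}(Λ). -/
open Complex Set

noncomputable section

/-- The open unit disk `𝔻` in the complex plane. -/
def unitDisk : Set ℂ := {z : ℂ | ‖z‖ < 1}

/-- The Laplacian of `H : ℂ → ℝ`, as the sum of the second directional
derivatives in the directions `1` and `I`. -/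
def laplacian (H : ℂ → ℝ) (z : ℂ) : ℝ :=
  fderiv ℝ (fun w => fderiv ℝ H w 1) z 1 +
    fderiv ℝ (fun w => fderiv ℝ H w Complex.I) z Complex.I

/-- `H` is harmonic on the unit disk: twice continuously differentiable with
vanishing Laplacian. -/
def HarmonicOnDisk (H : ℂ → ℝ) : Prop :=
  ContDiffOn ℝ 2 H unitDisk ∧ ∀ z ∈ unitDisk, laplacian H z = 0

/-- `H ∈ Har₊(𝔻)`: a non-negative harmonic function on the unit disk. -/
def HarPos (H : ℂ → ℝ) : Prop :=
  HarmonicOnDisk H ∧ ∀ z ∈ unitDisk, 0 ≤ H z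

/-- The pseudohyperbolic distance `ρ(z,w) = |z-w| / |1 - conj z * w|`. -/
def pDist (z w : ℂ) : ℝ := ‖(z - w) / (1 - (starRingEnd ℂ) z * w)‖

/-- The pseudohyperbolic disk `D(z,r) = {w ∈ 𝔻 : ρ(z,w) < r}`. -/
def pDisk (z : ℂ) (r : ℝ) : Set ℂ := {w ∈ unitDisk | pDist z w < r}

/-- The Blaschke factor `b_a(z) = (z - a)/(1 - conj a * z)`. -/
def blaschke (a z : ℂ) : ℂ := (z - a) / (1 - (starRingEnd ℂ) a * z)

/-- A discrete sequence in `𝔻`: a set of (pairwise distinct) points of the unit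
disk with no accumulation point inside the disk. -/
def DiscreteSeq (Λ : Set ℂ) : Prop :=
  Λ ⊆ unitDisk ∧ ∀ z ∈ unitDisk, ¬ AccPt z (Filter.principal Λ)

/-- The Nevanlinna class `N`: holomorphic functions on `𝔻` such that
`log⁺ |f|` admits a majorant in `Har₊(𝔻)`. -/
def Nevanlinna (f : ℂ → ℂ) : Prop :=
  DifferentiableOn ℂ f unitDisk ∧
    ∃ H : ℂ → ℝ, HarPos H ∧ ∀ z ∈ unitDisk, Real.log (max (‖f z‖) 1) ≤ H z

/-- `Λ ∈ Int N`: for every bounded family of values on `Λ` there is a function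
in the Nevanlinna class interpolating it. -/
def IntN (Λ : Set ℂ) : Prop :=
  ∀ v : ℂ → ℂ, (∃ C : ℝ, ∀ lam ∈ Λ, ‖v lam‖ ≤ C) →
    ∃ f : ℂ → ℂ, Nevanlinna f ∧ ∀ lam ∈ Λ, f lam = v lam

/-- Pseudohyperbolic divided differences:
`divDiff j ω z = Δʲω(z 0, …, z j)`. -/
def divDiff : (j : ℕ) → (ℂ → ℂ) → (Fin (j + 1) → ℂ) → ℂ
  | 0, ω, z => ω (z 0)
  | j + 1, ω, z =>
      (divDiff j ω (fun i => z i.succ) - divDiff j ω (fun i => z i.castSucc)) /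
        blaschke (z 0) (z (Fin.last (j + 1)))

/-- `ω ∈ X^m(Λ)`: the divided differences of order `m` (on tuples of `m+1`
pairwise distinct points of `Λ`) are uniformly controlled by a positive
harmonic function. -/
def MemX (m : ℕ) (Λ : Set ℂ) (ω : ℂ → ℂ) : Prop :=
  ∃ H : ℂ → ℝ, HarPos H ∧ ∃ C : ℝ,
    ∀ z : Fin (m + 1) → ℂ, (∀ i, z i ∈ Λ) → Function.Injective z →
      ‖divDiff m ω z‖ * Real.exp (-(∑ i, H (z i))) ≤ C

/-- `Λ` is weakly separated: for some `H ∈ Har₊(𝔻)` the pseudohyperbolic disks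
`D(λ, e^{-H(λ)})`, `λ ∈ Λ`, are pairwise disjoint. -/
def WeaklySep (Λ : Set ℂ) : Prop :=
  ∃ H : ℂ → ℝ, HarPos H ∧ ∀ lam ∈ Λ, ∀ mu ∈ Λ, lam ≠ mu →
    Disjoint (pDisk lam (Real.exp (-H lam))) (pDisk mu (Real.exp (-H mu)))

/-!
Unwinding the recursion once gives
`Δᵐ(λ₀,…,λₘ) = Δᵐ(λ₁,…,λₘ,μ) - b_{λ₀}(μ) Δᵐ⁺¹(λ₀,…,λₘ,μ)` with `|b_{λ₀}(μ)| ≤ 1` on `𝔻`.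
Fix a set `F` of `2m+2` points of `Λ`. Given distinct `λ₀,…,λₘ ∈ Λ`, some `m+1` points
`μ₀,…,μₘ` of `F` avoid them, and replacing the `λ`'s by the `μ`'s one at a time bounds
`|Δᵐ(λ)|` by `|Δᵐ(μ)|` plus `m+1` divided differences of order `m+1`, each at most
`C exp(Σ H(λᵢ) + Σ_F H)`. As `Δᵐ(μ)` takes finitely many values, multiplying by
`exp(-Σ H(λᵢ))` gives the `X^m` bound with the same `H`. Finite `Λ` are trivial.
-/

lemma harPos_zero : HarPos fun _ => 0 :=
  ⟨⟨contDiffOn_const, fun z _ => by simp [laplacian]⟩, fun _ _ => le_rfl⟩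

section Blaschke

variable {a z : ℂ}

lemma normSq_one_sub_conj_mul_sub_normSq_sub (a z : ℂ) :
    Complex.normSq (1 - starRingEnd ℂ a * z) - Complex.normSq (z - a) =
      (1 - Complex.normSq a) * (1 - Complex.normSq z) := by
  simp only [Complex.normSq_apply, Complex.mul_re, Complex.mul_im, Complex.sub_re,
    Complex.sub_im, Complex.one_re, Complex.one_im, Complex.conj_re, Complex.conj_im]
  ring

lemma norm_sub_le_norm_one_sub_conj_mul (ha : ‖a‖ ≤ 1) (hz : ‖z‖ ≤ 1) :
    ‖z - a‖ ≤ ‖1 - starRingEnd ℂ a * z‖ := by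
  have ha' : Complex.normSq a ≤ 1 := by
    rw [← Complex.sq_norm]; exact pow_le_one₀ (norm_nonneg a) ha
  have hz' : Complex.normSq z ≤ 1 := by
    rw [← Complex.sq_norm]; exact pow_le_one₀ (norm_nonneg z) hz
  have key := normSq_one_sub_conj_mul_sub_normSq_sub a z
  rw [Complex.norm_def, Complex.norm_def]
  exact Real.sqrt_le_sqrt (by nlinarith)

lemma norm_blaschke_le_one (ha : ‖a‖ ≤ 1) (hz : ‖z‖ ≤ 1) : ‖blaschke a z‖ ≤ 1 := by
  rw [blaschke, norm_div]
  exact div_le_one_of_le₀ (norm_sub_le_norm_one_sub_conj_mul ha hz) (norm_nonneg _)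

lemma one_sub_conj_mul_ne_zero (ha : ‖a‖ < 1) (hz : ‖z‖ < 1) :
    1 - starRingEnd ℂ a * z ≠ 0 := by
  rw [sub_ne_zero]
  intro h
  have : ‖starRingEnd ℂ a * z‖ < 1 := by
    rw [norm_mul, Complex.norm_conj]
    exact mul_lt_one_of_nonneg_of_lt_one_left (norm_nonneg a) ha hz.le
  rw [← h, norm_one] at this
  exact lt_irrefl 1 this

lemma blaschke_ne_zero (ha : ‖a‖ < 1) (hz : ‖z‖ < 1) (hne : a ≠ z) : blaschke a z ≠ 0 :=
  div_ne_zero (sub_ne_zero.mpr hne.symm) (one_sub_conj_mul_ne_zero ha hz)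

end Blaschke

lemma Finset.sum_comp_le_sum_of_injective {ι α : Type*} [Fintype ι] [DecidableEq α]
    {f : ι → α} (hf : Function.Injective f) {s : Finset α} (hs : ∀ i, f i ∈ s) {g : α → ℝ}
    (hg : ∀ x ∈ s, 0 ≤ g x) : ∑ i, g (f i) ≤ ∑ x ∈ s, g x := by
  rw [← Finset.sum_image fun i _ j _ h => hf h]
  exact Finset.sum_le_sum_of_subset_of_nonneg (by simpa [Finset.subset_iff] using hs)
    fun x hx _ => hg x hx

lemma Finset.exists_append_injective {α : Type*} [DecidableEq α] {k n : ℕ} (F : Finset α)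
    {l : Fin k → α} (hl : Function.Injective l) (hcard : k + n ≤ F.card) :
    ∃ μ : Fin n → α, (∀ i, μ i ∈ F) ∧ Function.Injective (Fin.append l μ) := by
  set t := F \ Finset.univ.image l
  have ht : n ≤ t.card := by
    have : F.card - (Finset.univ.image l).card ≤ t.card := Finset.le_card_sdiff _ _
    have := (Finset.card_image_le (s := Finset.univ) (f := l)).trans_eq (Finset.card_fin k)
    omega
  obtain ⟨e⟩ := Function.Embedding.nonempty_of_card_le (α := Fin n) (β := t) (by simpa using ht)
  refine ⟨fun i => e i, fun i => (Finset.mem_sdiff.1 (e i).2).1, ?_⟩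
  refine Fin.append_injective_iff.2 ⟨hl, Subtype.val_injective.comp e.injective, fun i j h => ?_⟩
  exact (Finset.mem_sdiff.1 (e j).2).2 (Finset.mem_image.2 ⟨i, Finset.mem_univ _, h⟩)

lemma le_max_mul_exp_of_mul_exp_neg_le {a C s t : ℝ} (h : a * Real.exp (-s) ≤ C) (hst : s ≤ t) :
    a ≤ max C 0 * Real.exp t :=
  calc a ≤ C * Real.exp s := (mul_inv_le_iff₀ (Real.exp_pos _)).1 (by rwa [← Real.exp_neg])
    _ ≤ max C 0 * Real.exp t := by gcongr; exact le_max_left _ _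

section DividedDifferences

variable {m : ℕ} {ω : ℂ → ℂ} {Λ : Set ℂ}

lemma divDiff_castSucc_eq (z : Fin (m + 2) → ℂ) (h0 : ‖z 0‖ < 1)
    (hlast : ‖z (Fin.last _)‖ < 1) (hne : z 0 ≠ z (Fin.last _)) :
    divDiff m ω (fun i => z i.castSucc) =
      divDiff m ω (fun i => z i.succ) - blaschke (z 0) (z (Fin.last _)) * divDiff (m + 1) ω z := by
  have hb := blaschke_ne_zero h0 hlast hne
  rw [divDiff, mul_div_cancel₀ _ hb]
  ring

lemma norm_divDiff_castSucc_le (z : Fin (m + 2) → ℂ) (h0 : ‖z 0‖ < 1)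
    (hlast : ‖z (Fin.last _)‖ < 1) (hne : z 0 ≠ z (Fin.last _)) :
    ‖divDiff m ω (fun i => z i.castSucc)‖ ≤
      ‖divDiff m ω (fun i => z i.succ)‖ + ‖divDiff (m + 1) ω z‖ := by
  rw [divDiff_castSucc_eq z h0 hlast hne]
  calc _ ≤ ‖divDiff m ω (fun i => z i.succ)‖ +
        ‖blaschke (z 0) (z (Fin.last _))‖ * ‖divDiff (m + 1) ω z‖ := by
        rw [← norm_mul]; exact norm_sub_le _ _
    _ ≤ _ := by
        gcongr
        exact mul_le_of_le_one_left (norm_nonneg _) (norm_blaschke_le_one h0.le hlast.le)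

lemma norm_divDiff_le_of_windows (c : ℕ → ℂ) (d : ℕ) (B : ℝ)
    (hdisk : ∀ n < d + m + 1, ‖c n‖ < 1) (hne : ∀ k < d, c k ≠ c (k + (m + 1)))
    (hB : ∀ k < d, ‖divDiff (m + 1) ω (fun i : Fin (m + 2) => c (k + i))‖ ≤ B) :
    ‖divDiff m ω (fun i : Fin (m + 1) => c i)‖ ≤
      ‖divDiff m ω (fun i : Fin (m + 1) => c (d + i))‖ + d * B := by
  induction d with
  | zero => simp
  | succ d ih =>
    have hstep := norm_divDiff_castSucc_le (ω := ω) (fun i : Fin (m + 2) => c (d + i))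
      (by simpa using hdisk d (by omega)) (by simpa using hdisk (d + (m + 1)) (by omega))
      (by simpa using hne d (by omega))
    have hshift : (fun i : Fin (m + 1) => c (d + (i.succ : ℕ))) =
        fun i : Fin (m + 1) => c (d + 1 + i) := by
      funext i; rw [Fin.val_succ, add_right_comm, add_assoc]
    simp only [Fin.val_castSucc, hshift] at hstep
    have := ih (fun n hn => hdisk n (by omega)) (fun k hk => hne k (by omega))
      (fun k hk => hB k (by omega))
    push_cast
    linarith [hB d (by omega)]

lemma norm_divDiff_le_sum (s : Finset ℂ) (z : Fin (m + 1) → ℂ) (hz : ∀ i, z i ∈ s) :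
    ‖divDiff m ω z‖ ≤ ∑ τ : Fin (m + 1) → s, ‖divDiff m ω fun i => τ i‖ :=
  Finset.single_le_sum (f := fun τ : Fin (m + 1) → s => ‖divDiff m ω fun i => τ i‖)
    (fun _ _ => norm_nonneg _) (Finset.mem_univ fun i => ⟨z i, hz i⟩)

lemma memX_of_finite (hΛ : Λ.Finite) : MemX m Λ ω :=
  ⟨fun _ => 0, harPos_zero, ∑ τ : Fin (m + 1) → hΛ.toFinset, ‖divDiff m ω fun i => τ i‖,
    fun z hz _ => by simpa using norm_divDiff_le_sum _ z fun i => hΛ.mem_toFinset.2 (hz i)⟩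

lemma norm_divDiff_le_of_append (l μ : Fin (m + 1) → ℂ)
    (hinj : Function.Injective (Fin.append l μ)) (hdisk : ∀ j, ‖Fin.append l μ j‖ < 1) (B : ℝ)
    (hB : ∀ z : Fin (m + 2) → ℂ, Function.Injective z → (∀ i, z i ∈ Set.range (Fin.append l μ)) →
      ‖divDiff (m + 1) ω z‖ ≤ B) :
    ‖divDiff m ω l‖ ≤ ‖divDiff m ω μ‖ + (m + 1) * B := by
  set v := Fin.append l μ
  -- `v` as a sequence (junk `0` past its end), so that windows are `fun i => c (k + i)`
  set c : ℕ → ℂ := Function.extend Fin.val v 0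
  have hcv : ∀ n (hn : n < (m + 1) + (m + 1)), c n = v ⟨n, hn⟩ :=
    fun n hn => Fin.val_injective.extend_apply v 0 ⟨n, hn⟩
  have hwindow : ∀ k < m + 1, ‖divDiff (m + 1) ω fun i : Fin (m + 2) => c (k + i)‖ ≤ B := by
    intro k hk
    have hw : (fun i : Fin (m + 2) => c (k + i)) =
        fun i : Fin (m + 2) => v ⟨k + i, by have := i.isLt; omega⟩ :=
      funext fun i => hcv _ _
    refine hB _ ?_ fun i => ⟨_, (congrFun hw i).symm⟩
    rw [hw]
    intro i j hij
    simpa [Fin.ext_iff] using hinj hij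
  have hchain := norm_divDiff_le_of_windows (ω := ω) c (m + 1) B
    (fun n hn => by rw [hcv n (by omega)]; exact hdisk _)
    (fun k hk => by rw [hcv k (by omega), hcv _ (by omega)]; exact hinj.ne (by simp [Fin.ext_iff]))
    hwindow
  have hl : (fun i : Fin (m + 1) => c i) = l :=
    funext fun i => (hcv i (Nat.lt_add_right _ i.isLt)).trans (Fin.append_left l μ i)
  have hμ : (fun i : Fin (m + 1) => c (m + 1 + i)) = μ :=
    funext fun i => (hcv _ (Nat.add_lt_add_left i.isLt _)).trans (Fin.append_right l μ i)
  rw [hl, hμ] at hchain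
  exact_mod_cast hchain

lemma memX_of_memX_succ_of_infinite (hΛ : Λ ⊆ unitDisk) (hinf : Λ.Infinite)
    (h : MemX (m + 1) Λ ω) : MemX m Λ ω := by
  classical
  obtain ⟨H, hH, C, hC⟩ := h
  have hH0 : ∀ x ∈ Λ, 0 ≤ H x := fun x hx => hH.2 x (hΛ hx)
  obtain ⟨F, hFΛ, hFcard⟩ := hinf.exists_subset_card_eq ((m + 1) + (m + 1))
  set K := ∑ x ∈ F, H x
  set C₀ := ∑ τ : Fin (m + 1) → F, ‖divDiff m ω fun i => τ i‖
  refine ⟨H, hH, C₀ + (m + 1) * (max C 0 * Real.exp K), fun l hl hlinj => ?_⟩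
  obtain ⟨μ, hμF, hinj⟩ := F.exists_append_injective hlinj hFcard.ge
  set S := ∑ i, H (l i)
  set v := Fin.append l μ
  have hvΛ : ∀ j, v j ∈ Λ := (Fin.forall_fin_add _).2
    ⟨fun i => by simpa only [v, Fin.append_left] using hl i,
      fun i => by simpa only [v, Fin.append_right] using hFΛ (hμF i)⟩
  have hsum_v : ∑ j, H (v j) ≤ S + K := by
    have hμ : ∑ i, H (μ i) ≤ K := Finset.sum_comp_le_sum_of_injective
      (Fin.append_injective_iff.1 hinj).2.1 hμF fun x hx => hH0 x (hFΛ hx)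
    rw [Fin.sum_univ_add (a := m + 1) (b := m + 1)]
    simp only [v, Fin.append_left, Fin.append_right]
    exact add_le_add_right hμ S
  have hB : ∀ z : Fin (m + 2) → ℂ, Function.Injective z → (∀ i, z i ∈ Set.range v) →
      ‖divDiff (m + 1) ω z‖ ≤ max C 0 * Real.exp (S + K) := by
    intro z hz hzv
    have hzΛ : ∀ i, z i ∈ Λ := fun i => by obtain ⟨j, hj⟩ := hzv i; exact hj ▸ hvΛ j
    have hsum : ∑ i, H (z i) ≤ S + K := by
      refine (Finset.sum_comp_le_sum_of_injective hz (s := Finset.univ.image v)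
        (fun i => by simpa using hzv i) fun x hx => ?_).trans ?_
      · obtain ⟨j, -, rfl⟩ := Finset.mem_image.1 hx
        exact hH0 _ (hvΛ j)
      · rwa [Finset.sum_image fun i _ j _ h => hinj h]
    exact le_max_mul_exp_of_mul_exp_neg_le (hC z hzΛ hz) hsum
  have hchain := norm_divDiff_le_of_append l μ hinj (fun j => hΛ (hvΛ j)) _ hB
  have hμC₀ : ‖divDiff m ω μ‖ ≤ C₀ := norm_divDiff_le_sum F μ hμF
  have hC₀ : 0 ≤ C₀ := Finset.sum_nonneg fun _ _ => norm_nonneg _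
  have hS : 0 ≤ S := Finset.sum_nonneg fun i _ => hH0 _ (hl i)
  have hexp : Real.exp (S + K) * Real.exp (-S) = Real.exp K := by rw [← Real.exp_add]; ring_nf
  calc ‖divDiff m ω l‖ * Real.exp (-S)
      ≤ (C₀ + (m + 1) * (max C 0 * Real.exp (S + K))) * Real.exp (-S) := by gcongr; linarith
    _ = C₀ * Real.exp (-S) + (m + 1) * (max C 0 * Real.exp K) := by
        linear_combination (↑m + 1) * max C 0 * hexp
    _ ≤ C₀ + (m + 1) * (max C 0 * Real.exp K) := by
        gcongr; exact mul_le_of_le_one_right hC₀ (Real.exp_le_one_iff.2 (by linarith))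

lemma memX_of_memX_succ (hΛ : Λ ⊆ unitDisk) (h : MemX (m + 1) Λ ω) : MemX m Λ ω :=
  Λ.finite_or_infinite.elim memX_of_finite fun hinf => memX_of_memX_succ_of_infinite hΛ hinf h

end DividedDifferences

/-- **Lemma 1.** `X^n(Λ) ⊆ X^{n-1}(Λ) ⊆ ⋯ ⊆ X^0(Λ)`; in particular
`ω ∈ X^n(Λ)` implies `ω ∈ X^{n-1}(Λ)`. -/
theorem X_chain_inclusions
    (n : ℕ) (hn : 1 ≤ n) (Λ : Set ℂ) (hΛ : DiscreteSeq Λ) (ω : ℂ → ℂ) :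
    (∀ m : ℕ, 1 ≤ m → m ≤ n → MemX m Λ ω → MemX (m - 1) Λ ω) ∧
      (MemX n Λ ω → MemX (n - 1) Λ ω) := by
  have hstep : ∀ m : ℕ, 1 ≤ m → MemX m Λ ω → MemX (m - 1) Λ ω
    | m + 1, _, h => memX_of_memX_succ hΛ.1 h
  exact ⟨fun m hm _ => hstep m hm, hstep n hn⟩
end
end

section
/- Let n ≥ 1 and let Λ be a discrete sequence in the unit disk 𝔻 that is the union of n weakly separated sequences. Then there exists H ∈ Har₊(𝔻) such that for every λ ∈ Λ the pseudohyperbolic disk D(λ, e^{−H(λ)}) contains at most n points of Λ. -/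
open Complex Set

noncomputable section

/-!
Harnack's inequality does all the work. If `G ≥ 0` is harmonic on `𝔻` and `μ` is
pseudohyperbolically close to `λ`, then `μ` lies in the Euclidean disk of radius
`(1 - |λ|)/2` about `λ`, so `G μ ≤ 3 G λ`. With `H = 4 + 3 ∑ᵢ Gᵢ`, where the `Gᵢ` witness
weak separation of the pieces `Λᵢ`, every `μ ∈ Λᵢ` in `D(λ, e^{-H(λ)})` has `λ` in its
own disk `D(μ, e^{-Gᵢ(μ)})`. These disks are pairwise disjoint, so each `Λᵢ` contributes
at most one point to `D(λ, e^{-H(λ)})`.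
-/

open InnerProductSpace Metric
open scoped Laplacian

lemma laplacian_eq_laplacian_of_contDiffAt {H : ℂ → ℝ} {z : ℂ} (hH : ContDiffAt ℝ 2 H z) :
    laplacian H z = Δ H z := by
  have hd : DifferentiableAt ℝ (fderiv ℝ H) z :=
    (hH.fderiv_right (m := 1) (by norm_num)).differentiableAt (by norm_num)
  simp only [laplacian_eq_iteratedFDeriv_complexPlane, iteratedFDeriv_two_apply, laplacian]
  rw [fderiv_clm_apply hd (differentiableAt_const _), fderiv_clm_apply hd (differentiableAt_const _)]
  simp

lemma isOpen_unitDisk : IsOpen unitDisk :=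
  isOpen_lt continuous_norm continuous_const

lemma harmonicOnDisk_iff_harmonicOnNhd {H : ℂ → ℝ} :
    HarmonicOnDisk H ↔ HarmonicOnNhd H unitDisk := by
  constructor
  · rintro ⟨hC, hΔ⟩ z hz
    have hC' : ∀ w ∈ unitDisk, ContDiffAt ℝ 2 H w :=
      fun w hw => hC.contDiffAt (isOpen_unitDisk.mem_nhds hw)
    refine ⟨hC' z hz, ?_⟩
    filter_upwards [isOpen_unitDisk.mem_nhds hz] with w hw
    rw [← laplacian_eq_laplacian_of_contDiffAt (hC' w hw), hΔ w hw, Pi.zero_apply]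
  · intro h
    refine ⟨h.contDiffOn, fun z hz => ?_⟩
    rw [laplacian_eq_laplacian_of_contDiffAt (h z hz).1, (h z hz).2.eq_of_nhds, Pi.zero_apply]

lemma InnerProductSpace.HarmonicOnNhd.sum {E F ι : Type*} [NormedAddCommGroup E]
    [InnerProductSpace ℝ E] [FiniteDimensional ℝ E] [NormedAddCommGroup F] [NormedSpace ℝ F]
    {f : ι → E → F} {t : Set E} (s : Finset ι) (hf : ∀ i ∈ s, HarmonicOnNhd (f i) t) :
    HarmonicOnNhd (fun x => ∑ i ∈ s, f i x) t := by
  induction s using Finset.cons_induction with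
  | empty => simp
  | cons a s ha ih =>
    simp only [Finset.sum_cons]
    exact (hf a (Finset.mem_cons_self a s)).add (ih fun i hi => hf i (Finset.mem_cons_of_mem hi))

lemma harPos_const_add_mul_sum {ι : Type*} {H : ι → ℂ → ℝ} (s : Finset ι) {a b : ℝ}
    (ha : 0 ≤ a) (hb : 0 ≤ b) (hH : ∀ i ∈ s, HarPos (H i)) :
    HarPos (fun z => a + b * ∑ i ∈ s, H i z) := by
  refine ⟨harmonicOnDisk_iff_harmonicOnNhd.2 ?_, fun z hz => ?_⟩
  · have hsum := HarmonicOnNhd.sum s fun i hi => harmonicOnDisk_iff_harmonicOnNhd.1 (hH i hi).1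
    exact (harmonicOnNhd_const a).add (hsum.const_smul (c := b))
  · exact add_nonneg ha (mul_nonneg hb (Finset.sum_nonneg fun i hi => (hH i hi).2 z hz))

theorem harnack_ball {H : ℂ → ℝ} {c z : ℂ} {R : ℝ} (hR : 0 < R) (hH : HarmonicOnNhd H (ball c R))
    (hpos : ∀ w ∈ ball c R, 0 ≤ H w) (hz : ‖z - c‖ ≤ R / 2) : H z ≤ 3 * H c := by
  obtain ⟨F, hF, hFre⟩ := hH.exists_analyticOnNhd_ball_re_eq
  have hshift : ∀ w ∈ ball (0 : ℂ) R, w + c ∈ ball c R := fun w hw => by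
    simpa [mem_ball, dist_eq_norm] using hw
  have hzB : z - c ∈ ball 0 R := by rw [mem_ball_zero_iff]; linarith
  refine le_of_forall_pos_le_add fun ε hε => ?_
  -- Borel–Carathéodory for `F c - F (· + c)`, whose real part is bounded by `H c < M`.
  set M := H c + ε / 2 with hMdef
  have hM : 0 < M := by rw [hMdef]; linarith [hpos c (mem_ball_self hR)]
  set f : ℂ → ℂ := fun w => F c - F (w + c)
  have hf : DifferentiableOn ℂ f (ball 0 R) := fun w hw =>
    ((hF _ (hshift w hw)).differentiableAt.comp w (differentiableAt_id.add_const c)).const_sub _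
      |>.differentiableWithinAt
  have hfre : ∀ w ∈ ball (0 : ℂ) R, (f w).re = H c - H (w + c) := fun w hw => by
    simp [f, ← hFre (mem_ball_self hR), ← hFre (hshift w hw)]
  have hBC := Complex.borelCaratheodory_zero hM hf
    (fun w hw => by simp only [Set.mem_ofPred_eq, hfre w hw, hMdef]; linarith [hpos _ (hshift w hw)])
    hR hzB (by simp [f])
  have hhalf : 2 * M * ‖z - c‖ / (R - ‖z - c‖) ≤ 2 * M := by
    rw [div_le_iff₀ (by linarith)]; nlinarith
  have hre := hfre _ hzB
  rw [sub_add_cancel] at hre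
  linarith [neg_le_abs (f (z - c)).re, Complex.abs_re_le_norm (f (z - c)), hMdef]

theorem HarPos.le_three_mul_of_norm_sub_le {H : ℂ → ℝ} (hH : HarPos H) {c z : ℂ}
    (hc : c ∈ unitDisk) (hz : ‖z - c‖ ≤ (1 - ‖c‖) / 2) : H z ≤ 3 * H c := by
  have hball : ball c (1 - ‖c‖) ⊆ unitDisk := fun w hw => by
    rw [mem_ball, dist_eq_norm] at hw
    show ‖w‖ < 1
    linarith [norm_le_norm_sub_add w c]
  have hc' : ‖c‖ < 1 := hc
  exact harnack_ball (by linarith) ((harmonicOnDisk_iff_harmonicOnNhd.1 hH.1).mono hball)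
    (fun w hw => hH.2 w (hball hw)) hz

lemma norm_sub_le_of_pDist_le {lam mu : ℂ} (hlam : lam ∈ unitDisk) (hmu : mu ∈ unitDisk)
    (h : pDist lam mu ≤ 1 / 5) : ‖mu - lam‖ ≤ (1 - ‖lam‖) / 2 := by
  have hl : ‖lam‖ < 1 := hlam
  have hm : ‖mu‖ < 1 := hmu
  set ρ := pDist lam mu with hρdef
  have hD : 0 < ‖1 - starRingEnd ℂ lam * mu‖ := by
    refine lt_of_lt_of_le ?_ (norm_sub_norm_le _ _)
    rw [norm_one, norm_mul, Complex.norm_conj]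
    nlinarith [norm_nonneg lam, norm_nonneg mu]
  have hρ : ‖lam - mu‖ = ρ * ‖1 - starRingEnd ℂ lam * mu‖ := by
    rw [hρdef, pDist, norm_div, div_mul_cancel₀ _ hD.ne']
  have hsplit : 1 - starRingEnd ℂ lam * mu
      = ((1 - ‖lam‖ ^ 2 : ℝ) : ℂ) + starRingEnd ℂ lam * (lam - mu) := by
    push_cast
    rw [← Complex.conj_mul']
    ring
  have hD_le : ‖1 - starRingEnd ℂ lam * mu‖ ≤ 2 * (1 - ‖lam‖) + ‖lam - mu‖ := by
    rw [hsplit]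
    refine (norm_add_le _ _).trans (add_le_add ?_ ?_)
    · rw [Complex.norm_real, Real.norm_eq_abs, abs_of_nonneg (by nlinarith [norm_nonneg lam])]
      nlinarith [norm_nonneg lam]
    · rw [norm_mul, Complex.norm_conj]
      exact mul_le_of_le_one_left (norm_nonneg _) hl.le
  have hρ0 : 0 ≤ ρ := norm_nonneg _
  rw [norm_sub_rev]
  nlinarith [mul_le_mul_of_nonneg_left hD_le hρ0, norm_nonneg (lam - mu), norm_nonneg lam]

lemma pDist_comm (z w : ℂ) : pDist z w = pDist w z := by
  rw [pDist, pDist, norm_div, norm_div, norm_sub_rev z w, ← Complex.norm_conj (1 - _)]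
  simp [mul_comm]

lemma Set.encard_iUnion_le_card_of_subsingleton {α ι : Type*} [Fintype ι] {s : ι → Set α}
    (hs : ∀ i, (s i).Subsingleton) : (⋃ i, s i).encard ≤ Fintype.card ι := by
  refine (Set.encard_iUnion_le_of_fintype s).trans ?_
  calc ∑ i, (s i).encard ≤ ∑ _ : ι, (1 : ℕ∞) :=
        Finset.sum_le_sum fun i _ => Set.encard_le_one_iff_subsingleton.2 (hs i)
    _ = Fintype.card ι := by simp

lemma subsingleton_inter_pDisk_of_disjoint {S : Set ℂ} {G : ℂ → ℝ} (hG : HarPos G)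
    (hS : S ⊆ unitDisk)
    (hdisj : ∀ lam ∈ S, ∀ mu ∈ S, lam ≠ mu →
      Disjoint (pDisk lam (Real.exp (-G lam))) (pDisk mu (Real.exp (-G mu))))
    {z : ℂ} (hz : z ∈ unitDisk) {r : ℝ} (hr : r ≤ 1 / 5) (hrG : r ≤ Real.exp (-(3 * G z))) :
    (S ∩ pDisk z r).Subsingleton := by
  have hmem : ∀ mu ∈ S ∩ pDisk z r, z ∈ pDisk mu (Real.exp (-G mu)) := by
    rintro mu ⟨hmuS, -, hzmu⟩
    have hGmu : G mu ≤ 3 * G z :=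
      hG.le_three_mul_of_norm_sub_le hz (norm_sub_le_of_pDist_le hz (hS hmuS) (by linarith))
    refine ⟨hz, ?_⟩
    rw [pDist_comm]
    exact hzmu.trans_le (hrG.trans (Real.exp_le_exp.2 (by linarith)))
  intro lam hlam mu hmu
  by_contra hne
  exact Set.disjoint_left.1 (hdisj lam hlam.1 mu hmu.1 hne) (hmem lam hlam) (hmem mu hmu)

theorem count_bound_of_union_of_weaklySep_general
    (n : ℕ) (Λ : Set ℂ) (hΛ : DiscreteSeq Λ)
    (h : ∃ Λs : Fin n → Set ℂ, Λ = ⋃ i, Λs i ∧ ∀ i, WeaklySep (Λs i)) :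
    ∃ H : ℂ → ℝ, HarPos H ∧
      ∀ lam ∈ Λ, (Λ ∩ pDisk lam (Real.exp (-H lam))).encard ≤ (n : ℕ∞) := by
  obtain ⟨Λs, rfl, hsep⟩ := h
  choose G hG hdisj using hsep
  refine ⟨fun z => 4 + 3 * ∑ i, G i z,
    harPos_const_add_mul_sum _ (by norm_num) (by norm_num) fun i _ => hG i, fun lam hlam => ?_⟩
  have hlamD := hΛ.1 hlam
  have hr : Real.exp (-(4 + 3 * ∑ i, G i lam)) ≤ 1 / 5 := by
    calc Real.exp (-(4 + 3 * ∑ i, G i lam)) ≤ Real.exp (-4) :=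
          Real.exp_le_exp.2 (by linarith [Finset.univ.sum_nonneg fun i _ => (hG i).2 lam hlamD])
      _ ≤ 1 / 5 := by
          rw [Real.exp_neg, one_div]
          exact inv_anti₀ (by norm_num) (by linarith [Real.add_one_le_exp 4])
  have hrG : ∀ i, Real.exp (-(4 + 3 * ∑ j, G j lam)) ≤ Real.exp (-(3 * G i lam)) := fun i =>
    Real.exp_le_exp.2 (by
      linarith [Finset.single_le_sum (fun j _ => (hG j).2 lam hlamD) (Finset.mem_univ i)])
  rw [Set.iUnion_inter]
  simpa using Set.encard_iUnion_le_card_of_subsingleton fun i =>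
    subsingleton_inter_pDisk_of_disjoint (hG i) ((Set.subset_iUnion Λs i).trans hΛ.1) (hdisj i)
      hlamD hr (hrG i)

/-- If `Λ` is the union of `n` weakly separated sequences, then for some
`H ∈ Har₊(𝔻)` every disk `D(λ, e^{-H(λ)})`, `λ ∈ Λ`, contains at most `n`
points of `Λ`. -/
theorem count_bound_of_union_of_weaklySep
    (n : ℕ) (hn : 1 ≤ n) (Λ : Set ℂ) (hΛ : DiscreteSeq Λ)
    (h : ∃ Λs : Fin n → Set ℂ, Λ = ⋃ i, Λs i ∧ ∀ i, WeaklySep (Λs i)) :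
    ∃ H : ℂ → ℝ, HarPos H ∧
      ∀ lam ∈ Λ, (Λ ∩ pDisk lam (Real.exp (-H lam))).encard ≤ (n : ℕ∞) :=
  count_bound_of_union_of_weaklySep_general n Λ hΛ h
end
end
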